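/- Fix e with 0 < e < 1/2, and suppose that for all ε ∈ (0, 2e) one has S(e, e³ − (e−ε)³) = −(1/2)[I₀(ε) + I₀(2e−ε)]. Then 2e³ < e^{3/2}, the point (e, 2e³) lies in the interior (in ℝ²) of R, and the function t ↦ S(e,t) is not real-analytic at t = 2e³, i.e., it does not agree with any real-analytic function on any open interval around 2e³. -/

import Mathlib

open MeasureTheory Real Set Filter

noncomputable section

/-- `I₀(u) = (1/2)[u ln u + (1-u) ln(1-u)]`, with the convention `log 0 = 0`
    giving `I₀(0) = I₀(1) = 0`. -/
def I0 (u : ℝ) : ℝ := (u * Real.log u + (1 - u) * Real.log (1 - u)) / 2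

/-- `I₀'(u) = (1/2)[ln u − ln(1−u)]`. -/
def I0d (u : ℝ) : ℝ := (Real.log u - Real.log (1 - u)) / 2

/-- `I₀''(u) = (1/2)[1/u + 1/(1−u)]`. -/
def I0dd (u : ℝ) : ℝ := (1 / u + 1 / (1 - u)) / 2

/-- A graphon: a measurable, symmetric function `[0,1]² → [0,1]`
    (here defined on all of `ℝ²`, with values used only on `[0,1]²`). -/
def IsGraphon (g : ℝ → ℝ → ℝ) : Prop :=
  Measurable (Function.uncurry g) ∧ (∀ x y, g x y = g y x) ∧ ∀ x y, g x y ∈ Icc (0 : ℝ) 1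

/-- The edge density `e(g) = ∫₀¹∫₀¹ g(x,y) dx dy`. -/
def edgeDensity (g : ℝ → ℝ → ℝ) : ℝ :=
  ∫ x in Icc (0 : ℝ) 1, ∫ y in Icc (0 : ℝ) 1, g x y

/-- The triangle density `t(g) = ∫₀¹∫₀¹∫₀¹ g(x,y) g(y,z) g(z,x) dx dy dz`. -/
def triangleDensity (g : ℝ → ℝ → ℝ) : ℝ :=
  ∫ x in Icc (0 : ℝ) 1, ∫ y in Icc (0 : ℝ) 1, ∫ z in Icc (0 : ℝ) 1, g x y * g y z * g z x

/-- The rate function `I(g) = ∫₀¹∫₀¹ I₀(g(x,y)) dx dy`. -/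
def rate (g : ℝ → ℝ → ℝ) : ℝ :=
  ∫ x in Icc (0 : ℝ) 1, ∫ y in Icc (0 : ℝ) 1, I0 (g x y)

/-- Lebesgue measure restricted to `[0,1]`. -/
def unitMeasure : Measure ℝ := volume.restrict (Icc (0 : ℝ) 1)

/-- Two graphons are equivalent if they agree a.e. after composing with
    measure-preserving maps of `[0,1]`. -/
def GraphonEquiv (f g : ℝ → ℝ → ℝ) : Prop :=
  ∃ σ σ' : ℝ → ℝ, MeasurePreserving σ unitMeasure unitMeasure ∧
    MeasurePreserving σ' unitMeasure unitMeasure ∧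
    ∀ᵐ p ∂(unitMeasure.prod unitMeasure), f (σ p.1) (σ p.2) = g (σ' p.1) (σ' p.2)

end

/-- The set `R` of achievable pairs `(e(g), t(g))`. -/
def Rset : Set (ℝ × ℝ) :=
  {q | ∃ g, IsGraphon g ∧ edgeDensity g = q.1 ∧ triangleDensity g = q.2}

/-- The entropy `S(e,t) = −inf { I(g) : e(g) = e, t(g) = t }`. -/
noncomputable def entropy (e t : ℝ) : ℝ :=
  -sInf (rate '' {g | IsGraphon g ∧ edgeDensity g = e ∧ triangleDensity g = t})

/-! For `e < 1`, every triangle density between `e³` and `e^{3/2}` is attained by planting a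
clique on `[0,s]` in an Erdős–Rényi graphon and tuning `s` (intermediate value theorem), so the
open region `e³ < t < e^{3/2}` lies in `R`; for `e < 1/2` it contains `(e, 2e³)`.

Along the curve `t = e³ + (e - δ)³`, which passes through `2e³` at `δ = 0`, the hypothesis gives
`S = -(I₀(2e - δ) + I₀(δ))/2`. As `I₀(δ)/δ ≤ (log δ)/2 → -∞`, this has infinite right derivative
at `δ = 0`, whereas an `f` analytic at `2e³` would make `δ ↦ f(e³ + (e - δ)³)` differentiable. -/

open Topology

noncomputable def chi (s : ℝ) : ℝ → ℝ := (Icc 0 s).indicator 1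

lemma chi_eq_zero_or_one (s x : ℝ) : chi s x = 0 ∨ chi s x = 1 := by
  by_cases h : x ∈ Icc 0 s <;> simp [chi, h]

lemma measurable_chi (s : ℝ) : Measurable (chi s) :=
  measurable_const.indicator measurableSet_Icc

lemma integral_add_mul_chi {s : ℝ} (hs : s ∈ Icc (0 : ℝ) 1) (a b : ℝ) :
    ∫ x in Icc (0 : ℝ) 1, (a + b * chi s x) = a + b * s := by
  have hchi : ∫ x in Icc (0 : ℝ) 1, chi s x = s := by
    rw [chi, integral_indicator_one measurableSet_Icc]
    simp [Icc_inter_Icc, hs.1, hs.2]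
  have hint : IntegrableOn (chi s) (Icc (0 : ℝ) 1) :=
    (integrable_const (1 : ℝ)).indicator measurableSet_Icc
  rw [integral_add (integrable_const a) (hint.const_mul b), integral_const_mul, hchi]
  simp

noncomputable def blockGraphon (s d : ℝ) (x y : ℝ) : ℝ := d + (1 - d) * chi s x * chi s y

lemma isGraphon_blockGraphon (s : ℝ) {d : ℝ} (hd : d ∈ Icc (0 : ℝ) 1) :
    IsGraphon (blockGraphon s d) := by
  refine ⟨?_, fun x y => by simp only [blockGraphon]; ring, fun x y => ?_⟩
  · exact measurable_const.add ((measurable_const.mul ((measurable_chi s).comp measurable_fst)).mul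
      ((measurable_chi s).comp measurable_snd))
  · rcases chi_eq_zero_or_one s x with hx | hx <;> rcases chi_eq_zero_or_one s y with hy | hy <;>
      simp [blockGraphon, hx, hy, hd.1, hd.2]

lemma edgeDensity_blockGraphon {s : ℝ} (hs : s ∈ Icc (0 : ℝ) 1) (d : ℝ) :
    edgeDensity (blockGraphon s d) = d + (1 - d) * s ^ 2 := by
  have hx : ∀ x, d + (1 - d) * chi s x * s = d + (1 - d) * s * chi s x := fun x => by ring
  simp only [edgeDensity, blockGraphon, integral_add_mul_chi hs, hx]
  ring

lemma triangleDensity_blockGraphon {s : ℝ} (hs : s ∈ Icc (0 : ℝ) 1) (d : ℝ) :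
    triangleDensity (blockGraphon s d) =
      d ^ 3 + 3 * (1 - d) * d ^ 2 * s ^ 2 + (3 * d * (1 - d) ^ 2 + (1 - d) ^ 3) * s ^ 3 := by
  set c := 1 - d
  set k := 3 * d * c ^ 2 + c ^ 3
  have hz : ∀ x y z, blockGraphon s d x y * blockGraphon s d y z * blockGraphon s d z x =
      (d ^ 3 + c * d ^ 2 * chi s x * chi s y) +
        (c * d ^ 2 * (chi s x + chi s y) + k * chi s x * chi s y) * chi s z := by
    intro x y z
    rcases chi_eq_zero_or_one s x with hx | hx <;> rcases chi_eq_zero_or_one s y with hy | hy <;>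
      rcases chi_eq_zero_or_one s z with hz | hz <;>
      simp only [blockGraphon, hx, hy, hz, c, k] <;> ring
  have hy : ∀ x y, (d ^ 3 + c * d ^ 2 * chi s x * chi s y) +
        (c * d ^ 2 * (chi s x + chi s y) + k * chi s x * chi s y) * s =
      (d ^ 3 + c * d ^ 2 * s * chi s x) +
        (c * d ^ 2 * chi s x + c * d ^ 2 * s + k * s * chi s x) * chi s y := fun x y => by ring
  have hx : ∀ x, (d ^ 3 + c * d ^ 2 * s * chi s x) +
        (c * d ^ 2 * chi s x + c * d ^ 2 * s + k * s * chi s x) * s =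
      (d ^ 3 + c * d ^ 2 * s ^ 2) + (2 * c * d ^ 2 * s + k * s ^ 2) * chi s x := fun x => by ring
  simp only [triangleDensity, hz, integral_add_mul_chi hs, hy, hx]
  ring

lemma rpow_three_halves {x : ℝ} (hx : 0 ≤ x) : x ^ (3 / 2 : ℝ) = √x ^ 3 := by
  rw [sqrt_eq_rpow, ← rpow_natCast, ← rpow_mul hx]
  norm_num

lemma mem_Rset {e t : ℝ} (he0 : 0 ≤ e) (he1 : e < 1) (ht1 : e ^ 3 ≤ t)
    (ht2 : t ≤ e ^ (3 / 2 : ℝ)) : (e, t) ∈ Rset := by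
  -- `d s` keeps the edge density at `e`; the triangle density `ψ s` runs from `e³` to `e^{3/2}`.
  set d : ℝ → ℝ := fun s => (e - s ^ 2) / (1 - s ^ 2)
  set ψ : ℝ → ℝ := fun s =>
    d s ^ 3 + 3 * (1 - d s) * d s ^ 2 * s ^ 2 + (3 * d s * (1 - d s) ^ 2 + (1 - d s) ^ 3) * s ^ 3
  have hsq : √e ^ 2 = e := sq_sqrt he0
  have hden : ∀ s ∈ Icc 0 √e, 0 < 1 - s ^ 2 := fun s hs => by
    nlinarith [pow_le_pow_left₀ hs.1 hs.2 2]
  have hψ : ContinuousOn ψ (Icc 0 √e) := by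
    have hd : ContinuousOn d (Icc 0 √e) :=
      ContinuousOn.div (by fun_prop) (by fun_prop) fun s hs => (hden s hs).ne'
    fun_prop
  obtain ⟨s, hs, hψs⟩ : t ∈ ψ '' Icc 0 √e := by
    refine intermediate_value_Icc (sqrt_nonneg e) hψ ⟨?_, ?_⟩
    · simpa [ψ, d] using ht1
    · simpa [ψ, d, hsq, rpow_three_halves he0] using ht2
  have hs1 : s ∈ Icc (0 : ℝ) 1 := ⟨hs.1, by nlinarith [hden s hs, hs.1]⟩
  have hds : d s ∈ Icc (0 : ℝ) 1 := by
    have := pow_le_pow_left₀ hs.1 hs.2 2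
    exact ⟨div_nonneg (by linarith) (hden s hs).le, (div_le_one (hden s hs)).2 (by linarith)⟩
  refine ⟨blockGraphon s (d s), isGraphon_blockGraphon s hds, ?_, ?_⟩
  · rw [edgeDensity_blockGraphon hs1]
    simp only [d]
    field_simp [(hden s hs).ne']
    ring
  · rw [triangleDensity_blockGraphon hs1]
    exact hψs

lemma mem_interior_Rset {e t : ℝ} (he0 : 0 < e) (he1 : e < 1) (ht1 : e ^ 3 < t)
    (ht2 : t < e ^ (3 / 2 : ℝ)) : (e, t) ∈ interior Rset := by
  let U : Set (ℝ × ℝ) := {p | 0 < p.1 ∧ p.1 < 1 ∧ p.1 ^ 3 < p.2 ∧ p.2 < p.1 ^ (3 / 2 : ℝ)}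
  have hU : IsOpen U := by
    have := continuous_rpow_const (q := 3 / 2) (by norm_num)
    refine (isOpen_lt continuous_const continuous_fst).inter
      ((isOpen_lt continuous_fst continuous_const).inter
      ((isOpen_lt (by fun_prop) continuous_snd).inter (isOpen_lt continuous_snd (by fun_prop))))
  refine interior_maximal (fun p hp => ?_) hU ⟨he0, he1, ht1, ht2⟩
  exact mem_Rset hp.1.le hp.2.1 hp.2.2.1.le hp.2.2.2.le

@[fun_prop]
lemma continuous_I0 : Continuous I0 := by
  unfold I0
  fun_prop

lemma differentiableAt_I0 {v : ℝ} (hv0 : 0 < v) (hv1 : v < 1) : DifferentiableAt ℝ I0 v := by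
  have h0 : v ≠ 0 := hv0.ne'
  have h1 : 1 - v ≠ 0 := by linarith
  unfold I0
  fun_prop (disch := assumption)

lemma tendsto_slope_I0_zero : Tendsto (slope I0 0) (𝓝[>] 0) atBot := by
  refine tendsto_atBot_mono' _ ?_ (tendsto_log_nhdsGT_zero.atBot_div_const two_pos)
  filter_upwards [Ioo_mem_nhdsGT one_pos] with δ hδ
  have hlog : (1 - δ) * log (1 - δ) ≤ 0 :=
    mul_nonpos_of_nonneg_of_nonpos (by linarith [hδ.2])
      (log_nonpos (by linarith [hδ.2]) (by linarith [hδ.1]))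
  rw [slope_def_field, div_le_div_iff₀ (by linarith [hδ.1]) two_pos]
  simp only [I0, sub_zero, mul_zero, log_zero, log_one, add_zero]
  nlinarith

lemma HasDerivAt.tendsto_slope_nhdsGT {f : ℝ → ℝ} {f' a : ℝ} (h : HasDerivAt f f' a) :
    Tendsto (slope f a) (𝓝[>] a) (𝓝 f') :=
  (hasDerivWithinAt_iff_tendsto_slope' self_notMem_Ioi).1 h.hasDerivWithinAt

lemma tendsto_slope_neg_I0_sub_add_I0 {v : ℝ} (hv0 : 0 < v) (hv1 : v < 1) :
    Tendsto (slope (fun δ => -(I0 (v - δ) + I0 δ) / 2) 0) (𝓝[>] 0) atTop := by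
  have hψ : HasDerivAt (fun δ => I0 (v - δ)) (deriv (fun δ => I0 (v - δ)) 0) 0 := by
    refine DifferentiableAt.hasDerivAt (DifferentiableAt.comp (g := I0) 0 ?_ (by fun_prop))
    simpa using differentiableAt_I0 hv0 hv1
  have hsum := hψ.tendsto_slope_nhdsGT.add_atBot tendsto_slope_I0_zero
  refine ((tendsto_neg_atBot_atTop.comp hsum).atTop_div_const two_pos).congr fun δ => ?_
  simp only [slope_def_field, Function.comp]
  ring

theorem not_differentiableAt_of_eventuallyEq_of_tendsto_slope_atTop {g φ : ℝ → ℝ} {a : ℝ}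
    (hφ : ContinuousWithinAt φ (Ioi a) a) (hgφ : g =ᶠ[𝓝[>] a] φ)
    (hslope : Tendsto (slope φ a) (𝓝[>] a) atTop) : ¬DifferentiableAt ℝ g a := by
  intro hg
  have hval : g a = φ a :=
    tendsto_nhds_unique ((hg.continuousAt.tendsto.mono_left nhdsWithin_le_nhds).congr' hgφ) hφ
  refine not_tendsto_nhds_of_tendsto_atTop hslope _
    (hg.hasDerivAt.tendsto_slope_nhdsGT.congr' ?_)
  filter_upwards [hgφ] with x hx
  rw [slope_def_field, slope_def_field, hx, hval]

/-- fixing `0 < e < 1/2`, if the perturbative entropy formula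
    holds for all `ε ∈ (0, 2e)`, then `2e³ < e^{3/2}`, the point `(e, 2e³)` is
    interior to `R`, and `t ↦ S(e,t)` is not real-analytic at `t = 2e³`. -/
theorem transition_in_t (e : ℝ) (he0 : 0 < e) (he : e < 1 / 2)
    (hyp : ∀ ε : ℝ, 0 < ε → ε < 2 * e →
      entropy e (e ^ 3 - (e - ε) ^ 3) = -(I0 ε + I0 (2 * e - ε)) / 2) :
    2 * e ^ 3 < e ^ ((3 : ℝ) / 2) ∧ (e, 2 * e ^ 3) ∈ interior Rset ∧
      ¬∃ (f : ℝ → ℝ) (a b : ℝ), a < 2 * e ^ 3 ∧ 2 * e ^ 3 < b ∧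
        (∀ t ∈ Ioo a b, AnalyticAt ℝ f t) ∧ ∀ t ∈ Ioo a b, f t = entropy e t := by
  have hcube : 2 * e ^ 3 < e ^ ((3 : ℝ) / 2) := by
    obtain ⟨r, hr0, rfl⟩ : ∃ r, 0 < r ∧ e = r ^ 2 := ⟨√e, sqrt_pos.2 he0, (sq_sqrt he0.le).symm⟩
    rw [rpow_three_halves (sq_nonneg r), sqrt_sq hr0.le]
    have hr3 : r ^ 3 < 1 / 2 := by nlinarith
    nlinarith [mul_pos (pow_pos hr0 3) (by linarith : (0 : ℝ) < 1 - 2 * r ^ 3)]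
  refine ⟨hcube, mem_interior_Rset he0 (by linarith) (by nlinarith [pow_pos he0 3]) hcube, ?_⟩
  rintro ⟨f, a, b, ha, hb, hf, hfS⟩
  set T : ℝ → ℝ := fun δ => e ^ 3 + (e - δ) ^ 3
  have hT0 : T 0 = 2 * e ^ 3 := by simp only [T]; ring
  have hT : ∀ᶠ δ in 𝓝 0, T δ ∈ Ioo a b :=
    (by fun_prop : Continuous T).continuousAt.preimage_mem_nhds (hT0 ▸ Ioo_mem_nhds ha hb)
  have hfT : DifferentiableAt ℝ (f ∘ T) 0 :=
    (hT0 ▸ (hf _ ⟨ha, hb⟩).differentiableAt).comp 0 (by fun_prop)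
  refine not_differentiableAt_of_eventuallyEq_of_tendsto_slope_atTop
    (by fun_prop : Continuous fun δ => -(I0 (2 * e - δ) + I0 δ) / 2).continuousWithinAt ?_
    (tendsto_slope_neg_I0_sub_add_I0 (by positivity) (by linarith)) hfT
  filter_upwards [nhdsWithin_le_nhds hT, Ioo_mem_nhdsGT (by positivity : (0 : ℝ) < 2 * e)]
    with δ hδT hδ
  have hS := hyp (2 * e - δ) (by linarith [hδ.2]) (by linarith [hδ.1])
  rw [sub_sub_cancel] at hS
  rw [Function.comp_apply, hfS _ hδT, ← hS]
  congr 1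
  ring
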